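/- arXiv:2109.10766 — 4 statements merged into one kernel-verified Lean document; each statement's English description precedes it below -/
import Mathlib

section
/- Let g be a (right) Leibniz algebra over a field k of characteristic zero and set x⋆y := xy − yx. Then for all x, y, z ∈ g: x(y⋆z) + y(z⋆x) + z(x⋆y) = 2·[(x⋆y)z + (y⋆z)x + (z⋆x)y]. -/
/-- For a (right) Leibniz algebra `g` over a field `k` of characteristic zero,
with `x⋆y := xy − yx`, one has
`x(y⋆z) + y(z⋆x) + z(x⋆y) = 2·[(x⋆y)z + (y⋆z)x + (z⋆x)y]`. -/
theorem leibniz_cyclic_identity_two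
    {k : Type*} [Field k] [CharZero k]
    {g : Type*} [AddCommGroup g] [Module k g]
    (mul : g →ₗ[k] g →ₗ[k] g)
    (hleib : ∀ x y z : g, mul x (mul y z) = mul (mul x y) z - mul (mul x z) y)
    (x y z : g) :
    mul x (mul y z - mul z y) + mul y (mul z x - mul x z) + mul z (mul x y - mul y x) =
      (2 : k) • (mul (mul x y - mul y x) z + mul (mul y z - mul z y) x
        + mul (mul z x - mul x z) y) := by
  simp only [map_sub, LinearMap.sub_apply, hleib, two_smul]
  abel
end

section
/- Let g be a (right) Leibniz algebra over a field k of characteristic zero. For every t ≥ 2 and every X ∈ L_t, one has ₁Δ_t(X) = 0, where ₁Δ_t : g^{⊗t} → g ⊗ g^{⊗(t−1)} is the linearized shuffle coproduct. (This is the concrete form of the statement that the restriction of the linear part of the shuffle coproduct of the tensor algebra T(sg) to the primitives Lie_t(sg) is trivial for t > 1.) -/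
open scoped TensorProduct

/-- The pure tensor `x 0 ⊗ x 1 ⊗ ... ⊗ x (n-1)`, viewed inside the tensor algebra
`T(g) = ⊕ₙ g^{⊗n}`. -/
noncomputable def pt (k : Type*) [CommSemiring k] {g : Type*} [AddCommMonoid g] [Module k g]
    {n : ℕ} (x : Fin n → g) : TensorAlgebra k g :=
  (List.ofFn fun i => TensorAlgebra.ι k (x i)).prod

/-- The degree-`n` component `g^{⊗n}` of the tensor algebra: the span of the pure tensors of
length `n`. -/
noncomputable def tensorGrade (k : Type*) [CommSemiring k] (g : Type*) [AddCommMonoid g] [Module k g]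
    (n : ℕ) : Submodule k (TensorAlgebra k g) :=
  Submodule.span k {z | ∃ x : Fin n → g, z = pt k x}

section AuxPT

variable {k : Type*} [CommSemiring k] {g : Type*} [AddCommMonoid g] [Module k g]

lemma pt_zero (x : Fin 0 → g) : pt k x = 1 := by simp [pt]

lemma pt_one (x : Fin 1 → g) : pt k x = TensorAlgebra.ι k (x 0) := by simp [pt]

lemma pt_snoc {n : ℕ} (x : Fin n → g) (y : g) :
    pt k (Fin.snoc x y) = pt k x * TensorAlgebra.ι k y := by
  rw [pt, List.ofFn_succ', List.concat_eq_append, List.prod_append]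
  simp [pt]

lemma pt_cons {n : ℕ} (x : Fin n → g) (y : g) :
    pt k (Fin.cons y x) = TensorAlgebra.ι k y * pt k x := by
  simp [pt, List.ofFn_succ]

lemma snoc_succAbove {α : Type*} {m : ℕ} (x : Fin (m + 1) → α) (y : α) (j : Fin (m + 1)) :
    (fun a : Fin (m + 1) => (Fin.snoc x y : Fin (m + 2) → α) (j.castSucc.succAbove a)) =
      (Fin.snoc (fun b : Fin m => x (j.succAbove b)) y : Fin (m + 1) → α) := by
  funext a
  rcases Fin.eq_castSucc_or_eq_last a with ⟨b, rfl⟩ | rfl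
  · rw [Fin.castSucc_succAbove_castSucc]
    simp
  · rw [Fin.succAbove_of_le_castSucc _ _ (by simpa using Fin.le_last j)]
    simp

lemma cons_succAbove {α : Type*} {m : ℕ} (x : Fin (m + 1) → α) (y : α) (j : Fin (m + 1)) :
    (fun a : Fin (m + 1) => (Fin.cons y x : Fin (m + 2) → α) (j.succ.succAbove a)) =
      (Fin.cons y (fun b : Fin m => x (j.succAbove b)) : Fin (m + 1) → α) := by
  funext a
  rcases Fin.eq_zero_or_eq_succ a with rfl | ⟨b, rfl⟩
  · simp
  · rw [Fin.succ_succAbove_succ]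
    simp

lemma mul_ι_mem_grade {n : ℕ} {Z : TensorAlgebra k g} (hZ : Z ∈ tensorGrade k g n) (y : g) :
    Z * TensorAlgebra.ι k y ∈ tensorGrade k g (n + 1) := by
  induction hZ using Submodule.span_induction with
  | mem z hz =>
    obtain ⟨x, rfl⟩ := hz
    exact Submodule.subset_span ⟨Fin.snoc x y, (pt_snoc x y).symm⟩
  | zero => simpa using Submodule.zero_mem _
  | add a b _ _ ha hb => rw [add_mul]; exact Submodule.add_mem _ ha hb
  | smul c a _ ha => rw [smul_mul_assoc]; exact Submodule.smul_mem _ c ha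

lemma ι_mul_mem_grade {n : ℕ} {Z : TensorAlgebra k g} (hZ : Z ∈ tensorGrade k g n) (y : g) :
    TensorAlgebra.ι k y * Z ∈ tensorGrade k g (n + 1) := by
  induction hZ using Submodule.span_induction with
  | mem z hz =>
    obtain ⟨x, rfl⟩ := hz
    exact Submodule.subset_span ⟨Fin.cons y x, (pt_cons x y).symm⟩
  | zero => simpa using Submodule.zero_mem _
  | add a b _ _ ha hb => rw [mul_add]; exact Submodule.add_mem _ ha hb
  | smul c a _ ha => rw [mul_smul_comm]; exact Submodule.smul_mem _ c ha

end AuxPT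

section delta

open TensorProduct

variable {k : Type*} [Field k] {g : Type*} [AddCommGroup g] [Module k g]
variable (Δ : TensorAlgebra k g →ₗ[k] g ⊗[k] TensorAlgebra k g)

lemma delta_mul_ι
    (hΔ : ∀ (m : ℕ) (x : Fin (m + 1) → g),
      Δ (pt k x) = ∑ i : Fin (m + 1),
        ((-1 : k) ^ (i : ℕ)) • ((x i) ⊗ₜ[k] (pt k fun a : Fin m => x (i.succAbove a))))
    (m : ℕ) {Z : TensorAlgebra k g} (hZ : Z ∈ tensorGrade k g (m + 1)) (y : g) :
    Δ (Z * TensorAlgebra.ι k y) =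
      (LinearMap.lTensor g (LinearMap.mulRight k (TensorAlgebra.ι k y))) (Δ Z)
        + ((-1 : k) ^ (m + 1)) • (y ⊗ₜ[k] Z) := by
  induction hZ using Submodule.span_induction with
  | mem z hz =>
    obtain ⟨x, rfl⟩ := hz
    rw [← pt_snoc, hΔ (m + 1) (Fin.snoc x y), hΔ m x, Fin.sum_univ_castSucc]
    simp only [snoc_succAbove, pt_snoc, Fin.snoc_last, Fin.coe_castSucc, Fin.val_last,
      Fin.succAbove_last, Fin.snoc_castSucc, map_sum, map_smul, LinearMap.lTensor_tmul,
      LinearMap.mulRight_apply]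
  | zero => simp
  | add a b _ _ ha hb =>
    rw [add_mul, map_add, ha, hb, map_add, map_add, tmul_add, smul_add]
    abel
  | smul c a _ ha =>
    rw [smul_mul_assoc, map_smul, ha, map_smul, map_smul, tmul_smul, smul_add, smul_comm]

lemma delta_ι_mul
    (hΔ : ∀ (m : ℕ) (x : Fin (m + 1) → g),
      Δ (pt k x) = ∑ i : Fin (m + 1),
        ((-1 : k) ^ (i : ℕ)) • ((x i) ⊗ₜ[k] (pt k fun a : Fin m => x (i.succAbove a))))
    (m : ℕ) {Z : TensorAlgebra k g} (hZ : Z ∈ tensorGrade k g (m + 1)) (y : g) :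
    Δ (TensorAlgebra.ι k y * Z) =
      (y ⊗ₜ[k] Z)
        - (LinearMap.lTensor g (LinearMap.mulLeft k (TensorAlgebra.ι k y))) (Δ Z) := by
  induction hZ using Submodule.span_induction with
  | mem z hz =>
    obtain ⟨x, rfl⟩ := hz
    rw [← pt_cons, hΔ (m + 1) (Fin.cons y x), hΔ m x, Fin.sum_univ_succ]
    simp only [cons_succAbove, pt_cons, Fin.cons_zero, Fin.cons_succ, Fin.val_zero,
      Fin.val_succ, Fin.zero_succAbove, pow_zero, one_smul, pow_succ, mul_neg_one, neg_smul,
      map_sum, map_smul, LinearMap.lTensor_tmul, LinearMap.mulLeft_apply,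
      Finset.sum_neg_distrib, sub_eq_add_neg]
  | zero => simp
  | add a b _ _ ha hb =>
    rw [mul_add, map_add, ha, hb, map_add, map_add, tmul_add]
    abel
  | smul c a _ ha =>
    rw [mul_smul_comm, map_smul, ha, map_smul, map_smul, tmul_smul, smul_sub]

end delta

/-- for a (right) Leibniz algebra `g` over a field `k` of characteristic zero,
the linearized shuffle coproduct `₁Δ` vanishes on `L_t` for `t ≥ 2`.
Here `L : ℕ → Submodule k (TensorAlgebra k g)` is the inductively defined family
`L 1 = g`, `L (n+1) = span {X⊗y − (−1)ⁿ y⊗X | X ∈ L n, y ∈ g}`, and `Δ` is the linear map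
determined on pure tensors by
`₁Δ(x₁⊗…⊗xₙ) = Σᵢ (−1)^{i+1} xᵢ ⊗ (x₁⊗…⊗x̂ᵢ⊗…⊗xₙ)`. -/
theorem linearized_coproduct_vanishes_on_primitives
    {k : Type*} [Field k] [CharZero k]
    {g : Type*} [AddCommGroup g] [Module k g]
    (mul : g →ₗ[k] g →ₗ[k] g)
    (hleib : ∀ x y z : g, mul x (mul y z) = mul (mul x y) z - mul (mul x z) y)
    (Δ : TensorAlgebra k g →ₗ[k] g ⊗[k] TensorAlgebra k g)
    (hΔ : ∀ (m : ℕ) (x : Fin (m + 1) → g),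
      Δ (pt k x) = ∑ i : Fin (m + 1),
        ((-1 : k) ^ (i : ℕ)) • ((x i) ⊗ₜ[k] (pt k fun a : Fin m => x (i.succAbove a))))
    (L : ℕ → Submodule k (TensorAlgebra k g))
    (hL1 : L 1 = tensorGrade k g 1)
    (hLsucc : ∀ n : ℕ, 1 ≤ n → L (n + 1) =
      Submodule.span k {z | ∃ X ∈ L n, ∃ y : g,
        z = X * TensorAlgebra.ι k y - ((-1 : k) ^ n) • (TensorAlgebra.ι k y * X)})
    (t : ℕ) (X : TensorAlgebra k g) (hX : X ∈ L (t + 2)) :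
    Δ X = 0 := by
  -- L n ⊆ tensorGrade n for n ≥ 1
  have hgrade : ∀ n : ℕ, 1 ≤ n → L n ≤ tensorGrade k g n := by
    intro n hn
    induction n, hn using Nat.le_induction with
    | base => rw [hL1]
    | succ n hn ih =>
      rw [hLsucc n hn, Submodule.span_le]
      rintro z ⟨W, hW, y, rfl⟩
      exact Submodule.sub_mem _ (mul_ι_mem_grade (ih hW) y)
        (Submodule.smul_mem _ _ (ι_mul_mem_grade (ih hW) y))
  induction t generalizing X with
  | zero =>
    rw [show (2 : ℕ) = 1 + 1 from rfl, hLsucc 1 le_rfl] at hX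
    induction hX using Submodule.span_induction with
    | mem z hz =>
      obtain ⟨W, hW, y, rfl⟩ := hz
      rw [hL1] at hW
      rw [map_sub, map_smul, delta_mul_ι Δ hΔ 0 hW y, delta_ι_mul Δ hΔ 0 hW y]
      have hAB : (LinearMap.lTensor g (LinearMap.mulRight k (TensorAlgebra.ι k y))) (Δ W)
          = (LinearMap.lTensor g (LinearMap.mulLeft k (TensorAlgebra.ι k y))) (Δ W) := by
        induction hW using Submodule.span_induction with
        | mem w hw =>
          obtain ⟨x, rfl⟩ := hw
          rw [hΔ 0 x]
          simp [pt_zero]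
        | zero => simp
        | add a b _ _ ha hb => rw [map_add, map_add, map_add, ha, hb]
        | smul c a _ ha => rw [map_smul, map_smul, map_smul, ha]
      rw [hAB]
      simp [TensorProduct.smul_tmul', smul_sub]
      abel
    | zero => simp
    | add a b _ _ ha hb => rw [map_add, ha, hb, add_zero]
    | smul c a _ ha => rw [map_smul, ha, smul_zero]
  | succ n ih =>
    rw [hLsucc (n + 2) (by omega)] at hX
    induction hX using Submodule.span_induction with
    | mem z hz =>
      obtain ⟨W, hW, y, rfl⟩ := hz
      have hWg : W ∈ tensorGrade k g (n + 2) := hgrade (n + 2) (by omega) hW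
      have hΔW : Δ W = 0 := ih W hW
      rw [map_sub, map_smul, delta_mul_ι Δ hΔ (n + 1) hWg y, delta_ι_mul Δ hΔ (n + 1) hWg y,
        hΔW]
      simp
    | zero => simp
    | add a b _ _ ha hb => rw [map_add, ha, hb, add_zero]
    | smul c a _ ha => rw [map_smul, ha, smul_zero]
end

section
/- Let g be a (right) Leibniz algebra over a field k of characteristic zero. For every n ≥ 1, every X ∈ g^{⊗n} and every y ∈ g, one has d_n(X·y) = (d_n X)·y; that is, the Leibniz differential is equivariant for the diagonal right action of g on tensor powers. -/
open scoped TensorProduct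

section Aux

variable {k : Type*} [CommSemiring k] {g : Type*} [AddCommMonoid g] [Module k g]

lemma pt_succ {m : ℕ} (x : Fin (m + 1) → g) :
    pt k x = TensorAlgebra.ι k (x 0) * pt k (x ∘ Fin.succ) := by
  simp [pt, List.ofFn_succ, Function.comp]

lemma pt_update_exists : ∀ {n : ℕ} (x : Fin n → g) (i : Fin n),
    ∃ u v : TensorAlgebra k g, ∀ a : g,
      pt k (Function.update x i a) = u * TensorAlgebra.ι k a * v := by
  intro n
  induction n with
  | zero => exact fun x i => i.elim0
  | succ m ih =>
    intro x i
    induction i using Fin.cases with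
    | zero =>
      refine ⟨1, pt k (x ∘ Fin.succ), fun a => ?_⟩
      have h1 : Function.update x 0 a ∘ Fin.succ = x ∘ Fin.succ := by
        funext j; exact Function.update_of_ne (Fin.succ_ne_zero j) _ _
      rw [pt_succ, h1, Function.update_self, one_mul]
    | succ i =>
      obtain ⟨u, v, h⟩ := ih (x ∘ Fin.succ) i
      refine ⟨TensorAlgebra.ι k (x 0) * u, v, fun a => ?_⟩
      have h1 : Function.update x i.succ a ∘ Fin.succ = Function.update (x ∘ Fin.succ) i a :=
        Function.update_comp_eq_of_injective _ (Fin.succ_injective m) _ _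
      rw [pt_succ, h1, h, Function.update_of_ne (Fin.succ_ne_zero i).symm]
      simp [mul_assoc]

end Aux

lemma pt_update_sub {k : Type*} [CommRing k] {g : Type*} [AddCommGroup g] [Module k g]
    {n : ℕ} (x : Fin n → g) (i : Fin n) (a b : g) :
    pt k (Function.update x i (a - b)) =
      pt k (Function.update x i a) - pt k (Function.update x i b) := by
  obtain ⟨u, v, h⟩ := pt_update_exists (k := k) x i
  rw [h, h, h, map_sub, mul_sub, sub_mul]

lemma key_step {k : Type*} [Field k] {g : Type*} [AddCommGroup g] [Module k g]
    (mul : g →ₗ[k] g →ₗ[k] g)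
    (hleib : ∀ x y z : g, mul x (mul y z) = mul (mul x y) z - mul (mul x z) y)
    {n : ℕ} (x : Fin (n + 1) → g) (y : g) (j : Fin (n + 1)) (p : Fin n)
    (hp : p.castSucc < j) :
    (∑ i : Fin (n + 1), pt k (Function.update
        (fun a : Fin n => (Function.update x i (mul (x i) y)) (j.succAbove a)) p
        (mul ((Function.update x i (mul (x i) y)) p.castSucc)
             ((Function.update x i (mul (x i) y)) j))))
    = ∑ a : Fin n,
        pt k (Function.update
          (Function.update (fun a : Fin n => x (j.succAbove a)) p (mul (x p.castSucc) (x j)))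
          a
          (mul ((Function.update (fun a : Fin n => x (j.succAbove a)) p
              (mul (x p.castSucc) (x j))) a) y)) := by
  set A : Fin n → g := fun a => x (j.succAbove a) with hA
  have hpj : p.castSucc ≠ j := ne_of_lt hp
  have hsp : j.succAbove p = p.castSucc := Fin.succAbove_of_castSucc_lt j p hp
  -- split the LHS at i = j
  rw [Fin.sum_univ_succAbove _ j]
  -- split the i ≠ j part and the RHS at a = p
  rw [Fintype.sum_eq_add_sum_compl p (fun a : Fin n => pt k (Function.update
        (fun b : Fin n => (Function.update x (j.succAbove a) (mul (x (j.succAbove a)) y))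
          (j.succAbove b)) p
        (mul ((Function.update x (j.succAbove a) (mul (x (j.succAbove a)) y)) p.castSucc)
             ((Function.update x (j.succAbove a) (mul (x (j.succAbove a)) y)) j)))),
     Fintype.sum_eq_add_sum_compl p]
  -- identify the i = j term
  have e1 : (fun a : Fin n => Function.update x j (mul (x j) y) (j.succAbove a)) = A :=
    funext fun a => Function.update_of_ne (Fin.succAbove_ne j a) _ _
  have e2 : ∀ a : Fin n,
      (fun b : Fin n => Function.update x (j.succAbove a) (mul (x (j.succAbove a)) y)
        (j.succAbove b)) = Function.update A a (mul (x (j.succAbove a)) y) :=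
    fun a => Function.update_comp_eq_of_injective' x
      (Fin.succAbove_right_injective (p := j)) a _
  rw [e1, Function.update_of_ne hpj, Function.update_self]
  -- i = succAbove p term
  have e3 : (fun b : Fin n => Function.update x (j.succAbove p) (mul (x (j.succAbove p)) y)
        (j.succAbove b)) = Function.update A p (mul (x p.castSucc) y) := by
    rw [e2 p, hsp]
  rw [e3]
  rw [show Function.update x (j.succAbove p) (mul (x (j.succAbove p)) y) p.castSucc
      = mul (x p.castSucc) y by rw [hsp]; exact Function.update_self _ _ _]
  rw [show Function.update x (j.succAbove p) (mul (x (j.succAbove p)) y) j = x j by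
      rw [hsp]; exact Function.update_of_ne hpj.symm _ _]
  rw [Function.update_idem]
  -- the Leibniz identity combines the two special terms
  have hL : pt k (Function.update A p (mul (x p.castSucc) (mul (x j) y)))
      = pt k (Function.update A p (mul (mul (x p.castSucc) (x j)) y))
        - pt k (Function.update A p (mul (mul (x p.castSucc) y) (x j))) := by
    rw [hleib (x p.castSucc) (x j) y, pt_update_sub]
  rw [hL]
  -- a = p term on the RHS
  rw [Function.update_self, Function.update_idem]
  -- remaining sums agree termwise
  have e4 : ∀ a ∈ ({p}ᶜ : Finset (Fin n)),
      pt k (Function.update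
        (fun b : Fin n => Function.update x (j.succAbove a) (mul (x (j.succAbove a)) y)
          (j.succAbove b)) p
        (mul (Function.update x (j.succAbove a) (mul (x (j.succAbove a)) y) p.castSucc)
             (Function.update x (j.succAbove a) (mul (x (j.succAbove a)) y) j)))
      = pt k (Function.update (Function.update A p (mul (x p.castSucc) (x j))) a
          (mul (Function.update A p (mul (x p.castSucc) (x j)) a) y)) := by
    intro a ha
    have hap : a ≠ p := by simpa using ha
    have hic : j.succAbove a ≠ p.castSucc := by
      rw [← hsp]; exact fun h => hap (Fin.succAbove_right_injective h)
    have hij : j.succAbove a ≠ j := Fin.succAbove_ne j a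
    rw [e2 a, Function.update_of_ne hic.symm, Function.update_of_ne (Fin.ne_succAbove j a),
      Function.update_of_ne hap]
    congr 1
    exact Function.update_comm hap _ _ _
  rw [Finset.sum_congr rfl e4]
  abel

/-- for a (right) Leibniz algebra `g` over a field `k` of characteristic zero,
the Leibniz differential is equivariant for the diagonal right action of `g`:
for `n ≥ 1`, `X ∈ g^{⊗n}` and `y ∈ g`, `d(X·y) = (dX)·y`.
Here `D` is the total Leibniz differential, determined on pure tensors of length `n ≥ 1` by
`d(x₁⊗…⊗xₙ) = Σ_{1≤i<j≤n} (−1)^{j+1} x₁⊗…⊗(xᵢxⱼ)⊗…⊗x̂ⱼ⊗…⊗xₙ`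
(in the `0`-indexed form below), and `act` is the diagonal right action. -/
theorem leibniz_differential_equivariant
    {k : Type*} [Field k] [CharZero k]
    {g : Type*} [AddCommGroup g] [Module k g]
    (mul : g →ₗ[k] g →ₗ[k] g)
    (hleib : ∀ x y z : g, mul x (mul y z) = mul (mul x y) z - mul (mul x z) y)
    (D : TensorAlgebra k g →ₗ[k] TensorAlgebra k g)
    (hD : ∀ (m : ℕ) (x : Fin (m + 1) → g),
      D (pt k x) = ∑ j : Fin (m + 1),
        ∑ i ∈ Finset.univ.filter (fun i : Fin m => i.castSucc < j),
          ((-1 : k) ^ (j : ℕ)) •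
            pt k (Function.update (fun a : Fin m => x (j.succAbove a)) i
              (mul (x i.castSucc) (x j))))
    (act : TensorAlgebra k g →ₗ[k] g →ₗ[k] TensorAlgebra k g)
    (hact : ∀ (n : ℕ) (x : Fin n → g) (y : g),
      act (pt k x) y = ∑ i : Fin n, pt k (Function.update x i (mul (x i) y)))
    (n : ℕ) (X : TensorAlgebra k g) (hX : X ∈ tensorGrade k g (n + 1)) (y : g) :
    D (act X y) = act (D X) y := by
  rw [tensorGrade] at hX
  induction hX using Submodule.span_induction with
  | zero => simp
  | add a b _ _ ha hb => simp [map_add, LinearMap.add_apply, ha, hb]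
  | smul c a _ ha => simp [map_smul, LinearMap.smul_apply, ha]
  | mem z hz =>
    obtain ⟨x, rfl⟩ := hz
    have L : D (act (pt k x) y) = ∑ i : Fin (n + 1), ∑ j : Fin (n + 1),
        ∑ p ∈ Finset.univ.filter (fun p : Fin n => p.castSucc < j),
          ((-1 : k) ^ (j : ℕ)) •
            pt k (Function.update
              (fun a : Fin n => (Function.update x i (mul (x i) y)) (j.succAbove a)) p
              (mul ((Function.update x i (mul (x i) y)) p.castSucc)
                   ((Function.update x i (mul (x i) y)) j))) := by
      rw [hact, map_sum]
      exact Finset.sum_congr rfl fun i _ => hD n _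
    have R : act (D (pt k x)) y = ∑ j : Fin (n + 1),
        ∑ p ∈ Finset.univ.filter (fun p : Fin n => p.castSucc < j),
          ((-1 : k) ^ (j : ℕ)) • ∑ a : Fin n,
            pt k (Function.update
              (Function.update (fun a : Fin n => x (j.succAbove a)) p
                (mul (x p.castSucc) (x j))) a
              (mul ((Function.update (fun a : Fin n => x (j.succAbove a)) p
                (mul (x p.castSucc) (x j))) a) y)) := by
      rw [hD n x, map_sum, LinearMap.sum_apply]
      refine Finset.sum_congr rfl fun j _ => ?_
      rw [map_sum, LinearMap.sum_apply]
      refine Finset.sum_congr rfl fun p _ => ?_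
      rw [map_smul, LinearMap.smul_apply, hact]
    rw [L, R, Finset.sum_comm]
    refine Finset.sum_congr rfl fun j _ => ?_
    rw [Finset.sum_comm]
    refine Finset.sum_congr rfl fun p hp => ?_
    rw [← Finset.smul_sum]
    congr 1
    exact key_step mul hleib x y j p (Finset.mem_filter.mp hp).2
end

section
/- Let g be a (right) Leibniz algebra over a field k of characteristic zero. For all n, t ≥ 1 and all x₁,…,xₙ, y₁,…,y_t ∈ g, writing X = x₁⊗…⊗xₙ and Y = y₁⊗…⊗y_t, the Leibniz differential satisfies d_{n+t}(X⊗Y) = (d_n X)⊗Y + (−1)^n X⊗(d_t Y) + Σ_{j=1}^t (−1)^{n+j+1} (X·y_j)⊗(y₁⊗…⊗y_{j−1}⊗y_{j+1}⊗…⊗y_t), where X·y_j is the diagonal right action. -/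
open scoped TensorProduct

section Aux

lemma append_mk_left {α : Type*} {m p : ℕ} (a : Fin m → α) (b : Fin p → α) {v : ℕ}
    (hv : v < m) {hvm : v < m + p} :
    Fin.append a b ⟨v, hvm⟩ = a ⟨v, hv⟩ :=
  Fin.append_left a b ⟨v, hv⟩

lemma append_mk_right {α : Type*} {m p : ℕ} (a : Fin m → α) (b : Fin p → α) {v : ℕ}
    (hv : m ≤ v) {hvm : v < m + p} :
    Fin.append a b ⟨v, hvm⟩ = b ⟨v - m, by omega⟩ := by
  have h : (⟨v, hvm⟩ : Fin (m + p)) = Fin.natAdd m ⟨v - m, by omega⟩ := by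
    ext; simp; omega
  rw [h, Fin.append_right]

lemma update_mk {α : Type*} {m : ℕ} (f : Fin m → α) (i : Fin m) (w : α) (v : ℕ)
    (hv : v < m) :
    Function.update f i w ⟨v, hv⟩ = if v = (i : ℕ) then w else f ⟨v, hv⟩ := by
  rw [Function.update_apply]
  congr 1
  simp [Fin.ext_iff]

lemma succAbove_coe {m : ℕ} (j : Fin (m + 1)) (a : Fin m) :
    (j.succAbove a : ℕ) = if (a : ℕ) < (j : ℕ) then (a : ℕ) else (a : ℕ) + 1 := by
  rw [Fin.succAbove]
  split_ifs with h1 h2 h3 <;> simp_all [Fin.lt_def]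

lemma pt_comp_cast {k : Type*} [CommSemiring k] {g : Type*} [AddCommMonoid g] [Module k g]
    {m n : ℕ} (h : m = n) (x : Fin n → g) :
    pt k (x ∘ Fin.cast h) = pt k x := by
  subst h; rfl

lemma pt_mul_pt {k : Type*} [CommSemiring k] {g : Type*} [AddCommMonoid g] [Module k g]
    {m p : ℕ} (a : Fin m → g) (b : Fin p → g) :
    pt k a * pt k b = pt k (Fin.append a b) := by
  unfold pt
  rw [← List.prod_append, ← List.ofFn_fin_append]
  congr 1
  apply congrArg
  funext i
  refine Fin.addCases (fun i => ?_) (fun i => ?_) i <;>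
    simp [Fin.append_left, Fin.append_right]

end Aux

lemma sum_filter_split {M : Type*} [AddCommMonoid M] {p q r : ℕ} (h : p + q = r) (J : ℕ)
    (s : Fin r → M) :
    (∑ i ∈ Finset.univ.filter (fun i : Fin r => (i : ℕ) < J), s i)
      = (∑ i ∈ Finset.univ.filter (fun i : Fin p => (i : ℕ) < J),
          s (Fin.cast h (Fin.castAdd q i)))
        + ∑ i ∈ Finset.univ.filter (fun i : Fin q => p + (i : ℕ) < J),
            s (Fin.cast h (Fin.natAdd p i)) := by
  subst h
  rw [Finset.sum_filter, Finset.sum_filter, Finset.sum_filter, Fin.sum_univ_add]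
  simp [Fin.coe_castAdd, Fin.coe_natAdd]

lemma succAbove_eq_mk {m : ℕ} (j : Fin (m + 1)) (v : ℕ) (hv : v < m) :
    j.succAbove ⟨v, hv⟩ = ⟨if v < (j : ℕ) then v else v + 1, by split_ifs <;> omega⟩ := by
  rw [Fin.succAbove]
  split_ifs with h1 h2 h3 <;>
    first
      | rfl
      | (exfalso; simp only [Fin.lt_def, Fin.coe_castSucc] at h1 ⊢; omega)

lemma pt_eq_of_comp {k : Type*} [CommSemiring k] {g : Type*} [AddCommMonoid g] [Module k g]
    {m p : ℕ} (h : p = m) (f : Fin m → g) (f' : Fin p → g)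
    (hf : ∀ (v : ℕ) (hv : v < m) (hv' : v < p), f ⟨v, hv⟩ = f' ⟨v, hv'⟩) :
    pt k f = pt k f' := by
  subst h
  exact congrArg (pt k) (funext fun a => hf a.1 a.2 a.2)


/-- for a (right) Leibniz algebra `g` over a field `k` of characteristic zero,
and pure tensors `X = x₁⊗…⊗xₙ`, `Y = y₁⊗…⊗y_t` (`n, t ≥ 1`), the Leibniz differential
satisfies
`d(X⊗Y) = (dX)⊗Y + (−1)ⁿ X⊗(dY) + Σⱼ (−1)^{n+j+1} (X·yⱼ)⊗(y₁⊗…⊗ŷⱼ⊗…⊗y_t)`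
(below, `n, t` of the statement are `n+1, t+1`, and `j` is `0`-indexed, so the sign
`(−1)^{n+j+1}` of the `1`-indexed statement becomes `(−1)^{(n+1)+j}`). -/
theorem leibniz_differential_of_concatenation
    {k : Type*} [Field k] [CharZero k]
    {g : Type*} [AddCommGroup g] [Module k g]
    (mul : g →ₗ[k] g →ₗ[k] g)
    (hleib : ∀ x y z : g, mul x (mul y z) = mul (mul x y) z - mul (mul x z) y)
    (D : TensorAlgebra k g →ₗ[k] TensorAlgebra k g)
    (hD : ∀ (m : ℕ) (x : Fin (m + 1) → g),
      D (pt k x) = ∑ j : Fin (m + 1),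
        ∑ i ∈ Finset.univ.filter (fun i : Fin m => i.castSucc < j),
          ((-1 : k) ^ (j : ℕ)) •
            pt k (Function.update (fun a : Fin m => x (j.succAbove a)) i
              (mul (x i.castSucc) (x j))))
    (act : TensorAlgebra k g →ₗ[k] g →ₗ[k] TensorAlgebra k g)
    (hact : ∀ (n : ℕ) (x : Fin n → g) (y : g),
      act (pt k x) y = ∑ i : Fin n, pt k (Function.update x i (mul (x i) y)))
    (n t : ℕ) (x : Fin (n + 1) → g) (y : Fin (t + 1) → g) :
    D (pt k x * pt k y) =
      D (pt k x) * pt k y + ((-1 : k) ^ (n + 1)) • (pt k x * D (pt k y))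
        + ∑ j : Fin (t + 1), ((-1 : k) ^ ((n + 1) + (j : ℕ))) •
            (act (pt k x) (y j) * pt k fun a : Fin t => y (j.succAbove a)) := by
    classical
  have hc : (n + 1) + (t + 1) = n + t + 1 + 1 := by omega
  have hi1 : n + (t + 1) = n + t + 1 := by omega
  have hi2 : (n + 1) + t = n + t + 1 := by omega
  set z : Fin (n + t + 1 + 1) → g := Fin.append x y ∘ Fin.cast hc.symm with hzdef
  have hzx' : ∀ (v : ℕ) (h2 : v < n + t + 1 + 1) (b : Fin (n + 1)), (b : ℕ) = v →
      z ⟨v, h2⟩ = x b := by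
    intro v h2 b hb
    have h1 : v < n + 1 := by omega
    show Fin.append x y (Fin.cast hc.symm ⟨v, h2⟩) = x b
    exact (append_mk_left x y h1).trans (congrArg x (Fin.ext hb.symm))
  have hzy' : ∀ (v : ℕ) (h2 : v < n + t + 1 + 1) (b : Fin (t + 1)), (n + 1) + (b : ℕ) = v →
      z ⟨v, h2⟩ = y b := by
    intro v h2 b hb
    have h1 : n + 1 ≤ v := by omega
    show Fin.append x y (Fin.cast hc.symm ⟨v, h2⟩) = y b
    exact (append_mk_right x y h1).trans (congrArg y (Fin.ext (by simp; omega)))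
  have hzmul : pt k x * pt k y = pt k z := by
    rw [pt_mul_pt, hzdef]; exact (pt_comp_cast hc.symm _).symm
  rw [hzmul]
  calc D (pt k z)
      = ∑ j : Fin (n + t + 1 + 1), ∑ i ∈ Finset.univ.filter (fun i : Fin (n + t + 1) => Fin.castSucc i < (j)), ((-1 : k) ^ ((j) : ℕ)) • pt k (Function.update (fun a : Fin (n + t + 1) => z (Fin.succAbove (j) a)) (i) (mul (z (Fin.castSucc (i))) (z (j)))) := hD (n + t + 1) z
    _ = (∑ jX : Fin (n + 1), ∑ i ∈ Finset.univ.filter (fun i : Fin (n + t + 1) => Fin.castSucc i < (finCongr hc (Fin.castAdd (t + 1) jX))), ((-1 : k) ^ ((finCongr hc (Fin.castAdd (t + 1) jX)) : ℕ)) • pt k (Function.update (fun a : Fin (n + t + 1) => z (Fin.succAbove (finCongr hc (Fin.castAdd (t + 1) jX)) a)) (i) (mul (z (Fin.castSucc (i))) (z (finCongr hc (Fin.castAdd (t + 1) jX))))))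
        + ∑ jY : Fin (t + 1), ∑ i ∈ Finset.univ.filter (fun i : Fin (n + t + 1) => Fin.castSucc i < (finCongr hc (Fin.natAdd (n + 1) jY))), ((-1 : k) ^ ((finCongr hc (Fin.natAdd (n + 1) jY)) : ℕ)) • pt k (Function.update (fun a : Fin (n + t + 1) => z (Fin.succAbove (finCongr hc (Fin.natAdd (n + 1) jY)) a)) (i) (mul (z (Fin.castSucc (i))) (z (finCongr hc (Fin.natAdd (n + 1) jY))))) := by
        rw [← Equiv.sum_comp (finCongr hc) (fun j : Fin (n + t + 1 + 1) => ∑ i ∈ Finset.univ.filter (fun i : Fin (n + t + 1) => Fin.castSucc i < (j)), ((-1 : k) ^ ((j) : ℕ)) • pt k (Function.update (fun a : Fin (n + t + 1) => z (Fin.succAbove (j) a)) (i) (mul (z (Fin.castSucc (i))) (z (j)))))]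
        exact Fin.sum_univ_add _
    _ = (∑ jX : Fin (n + 1),
          (∑ i ∈ Finset.univ.filter (fun i : Fin n => i.castSucc < jX), ((-1 : k) ^ ((jX : ℕ))) • pt k (Function.update (fun a : Fin n => x (Fin.succAbove jX a)) i (mul (x (Fin.castSucc i)) (x jX)))) * pt k y)
        + ∑ jY : Fin (t + 1),
            (((-1 : k) ^ ((n + 1) + (jY : ℕ))) • (act (pt k x) (y jY) * pt k fun a : Fin t => y (Fin.succAbove jY a))
              + ((-1 : k) ^ (n + 1)) •
                  (pt k x *
                    ∑ i ∈ Finset.univ.filter (fun i : Fin t => i.castSucc < jY), ((-1 : k) ^ ((jY : ℕ))) • pt k (Function.update (fun a : Fin t => y (Fin.succAbove jY a)) i (mul (y (Fin.castSucc i)) (y jY))))) := by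
        refine congrArg₂ (· + ·) (Finset.sum_congr rfl fun jX _ => ?_)
          (Finset.sum_congr rfl fun jY _ => ?_)
        · -- X part
          have hJ : ((finCongr hc (Fin.castAdd (t + 1) jX)) : ℕ) = (jX : ℕ) := by simp
          have hfil : Finset.univ.filter (fun i : Fin (n + t + 1) => Fin.castSucc i < (finCongr hc (Fin.castAdd (t + 1) jX)))
              = Finset.univ.filter (fun i : Fin (n + t + 1) => (i : ℕ) < (jX : ℕ)) :=
            Finset.filter_congr fun i _ => by simp [Fin.lt_def, hJ]
          rw [hfil, sum_filter_split hi1 ((jX : ℕ))]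
          have h0 : (∑ i ∈ Finset.univ.filter (fun i : Fin (t + 1) => n + (i : ℕ) < (jX : ℕ)),
              ((-1 : k) ^ ((finCongr hc (Fin.castAdd (t + 1) jX)) : ℕ)) • pt k (Function.update (fun a : Fin (n + t + 1) => z (Fin.succAbove (finCongr hc (Fin.castAdd (t + 1) jX)) a)) (Fin.cast hi1 (Fin.natAdd n i)) (mul (z (Fin.castSucc (Fin.cast hi1 (Fin.natAdd n i)))) (z (finCongr hc (Fin.castAdd (t + 1) jX)))))) = 0 := by
            rw [Finset.filter_eq_empty_iff.mpr (fun i _ => by omega), Finset.sum_empty]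
          rw [h0, add_zero, Finset.sum_mul]
          refine Finset.sum_congr
            (Finset.filter_congr fun i _ => by simp [Fin.lt_def]) (fun i hi => ?_)
          have hij : (i : ℕ) < (jX : ℕ) := by
            simpa [Fin.lt_def] using (Finset.mem_filter.mp hi).2
          have hterm : ((-1 : k) ^ ((finCongr hc (Fin.castAdd (t + 1) jX)) : ℕ)) • pt k (Function.update (fun a : Fin (n + t + 1) => z (Fin.succAbove (finCongr hc (Fin.castAdd (t + 1) jX)) a)) (Fin.cast hi1 (Fin.castAdd (t + 1) i)) (mul (z (Fin.castSucc (Fin.cast hi1 (Fin.castAdd (t + 1) i)))) (z (finCongr hc (Fin.castAdd (t + 1) jX)))))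
              = (((-1 : k) ^ ((jX : ℕ))) • pt k (Function.update (fun a : Fin n => x (Fin.succAbove jX a)) i (mul (x (Fin.castSucc i)) (x jX)))) * pt k y := by
            rw [smul_mul_assoc, pt_mul_pt]
            rw [show z (Fin.castSucc (Fin.cast hi1 (Fin.castAdd (t + 1) i))) = x (Fin.castSucc i) from hzx' _ _ _ (by simp)]
            rw [show z (finCongr hc (Fin.castAdd (t + 1) jX)) = x jX from hzx' _ _ _ (by simp)]
            refine congrArg₂ (· • ·) (by rw [hJ])
              (pt_eq_of_comp (by omega) _ _ fun v hv hv' => ?_)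
            by_cases h1 : v < n
            · rw [append_mk_left _ _ h1, update_mk, update_mk,
                show ((Fin.cast hi1 (Fin.castAdd (t + 1) i)) : ℕ) = (i : ℕ) from by simp]
              by_cases h2 : v = (i : ℕ)
              · rw [if_pos h2, if_pos h2]
              · rw [if_neg h2, if_neg h2]
                show z (Fin.succAbove (finCongr hc (Fin.castAdd (t + 1) jX)) ⟨v, hv⟩) = x (Fin.succAbove jX ⟨v, h1⟩)
                rw [succAbove_eq_mk, succAbove_eq_mk, hJ]
                exact hzx' _ _ _ rfl
            · rw [append_mk_right _ _ (Nat.le_of_not_lt h1), update_mk,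
                show ((Fin.cast hi1 (Fin.castAdd (t + 1) i)) : ℕ) = (i : ℕ) from by simp, if_neg (by omega)]
              show z (Fin.succAbove (finCongr hc (Fin.castAdd (t + 1) jX)) ⟨v, hv⟩) = y ⟨v - n, by omega⟩
              rw [succAbove_eq_mk, hJ]
              exact hzy' _ _ _
                (by rw [if_neg (show ¬ v < (jX : ℕ) from by omega)]
                    show n + 1 + (v - n) = v + 1
                    omega)
          exact hterm
        · -- Y part
          have hJ : ((finCongr hc (Fin.natAdd (n + 1) jY)) : ℕ) = n + 1 + (jY : ℕ) := by simp
          have hfil : Finset.univ.filter (fun i : Fin (n + t + 1) => Fin.castSucc i < (finCongr hc (Fin.natAdd (n + 1) jY)))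
              = Finset.univ.filter (fun i : Fin (n + t + 1) => (i : ℕ) < n + 1 + (jY : ℕ)) :=
            Finset.filter_congr fun i _ => by simp [Fin.lt_def, hJ]
          rw [hfil, sum_filter_split hi2 (n + 1 + (jY : ℕ)),
            Finset.filter_true_of_mem (fun (i : Fin (n + 1)) _ => by omega)]
          refine congrArg₂ (· + ·) ?_ ?_
          · -- cross terms
            have hterm : ∀ i : Fin (n + 1), ((-1 : k) ^ ((finCongr hc (Fin.natAdd (n + 1) jY)) : ℕ)) • pt k (Function.update (fun a : Fin (n + t + 1) => z (Fin.succAbove (finCongr hc (Fin.natAdd (n + 1) jY)) a)) (Fin.cast hi2 (Fin.castAdd t i)) (mul (z (Fin.castSucc (Fin.cast hi2 (Fin.castAdd t i)))) (z (finCongr hc (Fin.natAdd (n + 1) jY)))))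
                = ((-1 : k) ^ (n + 1 + (jY : ℕ))) •
                    (pt k (Function.update x i (mul (x i) (y jY))) *
                      pt k fun a : Fin t => y (Fin.succAbove jY a)) := by
              intro i
              rw [pt_mul_pt]
              rw [show z (Fin.castSucc (Fin.cast hi2 (Fin.castAdd t i))) = x i from hzx' _ _ _ (by simp)]
              rw [show z (finCongr hc (Fin.natAdd (n + 1) jY)) = y jY from hzy' _ _ _ (by simp)]
              refine congrArg₂ (· • ·) (by rw [hJ])
                (pt_eq_of_comp (by omega) _ _ fun v hv hv' => ?_)
              by_cases h1 : v < n + 1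
              · rw [append_mk_left _ _ h1, update_mk, update_mk,
                  show ((Fin.cast hi2 (Fin.castAdd t i)) : ℕ) = (i : ℕ) from by simp]
                by_cases h2 : v = (i : ℕ)
                · rw [if_pos h2, if_pos h2]
                · rw [if_neg h2, if_neg h2]
                  show z (Fin.succAbove (finCongr hc (Fin.natAdd (n + 1) jY)) ⟨v, hv⟩) = x ⟨v, h1⟩
                  rw [succAbove_eq_mk, hJ]
                  exact hzx' _ _ _
                    (by show v = if v < n + 1 + (jY : ℕ) then v else v + 1
                        rw [if_pos (by omega)])
              · rw [append_mk_right _ _ (Nat.le_of_not_lt h1), update_mk,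
                  show ((Fin.cast hi2 (Fin.castAdd t i)) : ℕ) = (i : ℕ) from by simp, if_neg (by omega)]
                show z (Fin.succAbove (finCongr hc (Fin.natAdd (n + 1) jY)) ⟨v, hv⟩)
                    = y (Fin.succAbove jY ⟨v - (n + 1), by omega⟩)
                rw [succAbove_eq_mk, succAbove_eq_mk]
                exact hzy' _ _ _
                  (by show n + 1 + (if v - (n + 1) < (jY : ℕ) then v - (n + 1)
                          else v - (n + 1) + 1) = if v < ((finCongr hc (Fin.natAdd (n + 1) jY)) : ℕ) then v else v + 1
                      split_ifs <;> omega)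
            rw [hact (n + 1) x (y jY), Finset.sum_mul, Finset.smul_sum]
            exact Finset.sum_congr rfl fun i _ => hterm i
          · -- internal Y terms
            rw [Finset.mul_sum, Finset.smul_sum]
            refine Finset.sum_congr
              (Finset.filter_congr fun i _ => by
                simp only [Fin.lt_def, Fin.coe_castSucc]; omega)
              fun i _ => ?_
            have hterm : ((-1 : k) ^ ((finCongr hc (Fin.natAdd (n + 1) jY)) : ℕ)) • pt k (Function.update (fun a : Fin (n + t + 1) => z (Fin.succAbove (finCongr hc (Fin.natAdd (n + 1) jY)) a)) (Fin.cast hi2 (Fin.natAdd (n + 1) i)) (mul (z (Fin.castSucc (Fin.cast hi2 (Fin.natAdd (n + 1) i)))) (z (finCongr hc (Fin.natAdd (n + 1) jY)))))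
                = ((-1 : k) ^ (n + 1)) • (pt k x * (((-1 : k) ^ ((jY : ℕ))) • pt k (Function.update (fun a : Fin t => y (Fin.succAbove jY a)) i (mul (y (Fin.castSucc i)) (y jY))))) := by
              rw [mul_smul_comm, smul_smul, ← pow_add, pt_mul_pt]
              rw [show z (Fin.castSucc (Fin.cast hi2 (Fin.natAdd (n + 1) i))) = y (Fin.castSucc i) from
                hzy' _ _ _ (by simp)]
              rw [show z (finCongr hc (Fin.natAdd (n + 1) jY)) = y jY from hzy' _ _ _ (by simp)]
              refine congrArg₂ (· • ·) (by rw [hJ])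
                (pt_eq_of_comp (by omega) _ _ fun v hv hv' => ?_)
              by_cases h1 : v < n + 1
              · rw [append_mk_left _ _ h1, update_mk,
                  show ((Fin.cast hi2 (Fin.natAdd (n + 1) i)) : ℕ) = n + 1 + (i : ℕ) from by simp, if_neg (by omega)]
                show z (Fin.succAbove (finCongr hc (Fin.natAdd (n + 1) jY)) ⟨v, hv⟩) = x ⟨v, h1⟩
                rw [succAbove_eq_mk, hJ]
                exact hzx' _ _ _
                  (by show v = if v < n + 1 + (jY : ℕ) then v else v + 1
                      rw [if_pos (by omega)])
              · rw [append_mk_right _ _ (Nat.le_of_not_lt h1), update_mk, update_mk,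
                  show ((Fin.cast hi2 (Fin.natAdd (n + 1) i)) : ℕ) = n + 1 + (i : ℕ) from by simp]
                by_cases h2 : v = n + 1 + (i : ℕ)
                · rw [if_pos h2, if_pos (by omega)]
                · rw [if_neg h2, if_neg (by omega)]
                  show z (Fin.succAbove (finCongr hc (Fin.natAdd (n + 1) jY)) ⟨v, hv⟩)
                      = y (Fin.succAbove jY ⟨v - (n + 1), by omega⟩)
                  rw [succAbove_eq_mk, succAbove_eq_mk]
                  exact hzy' _ _ _
                    (by show n + 1 + (if v - (n + 1) < (jY : ℕ) then v - (n + 1)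
                            else v - (n + 1) + 1) = if v < ((finCongr hc (Fin.natAdd (n + 1) jY)) : ℕ) then v else v + 1
                        split_ifs <;> omega)
            exact hterm
    _ = D (pt k x) * pt k y + ((-1 : k) ^ (n + 1)) • (pt k x * D (pt k y))
        + ∑ j : Fin (t + 1), ((-1 : k) ^ ((n + 1) + (j : ℕ))) •
            (act (pt k x) (y j) * pt k fun a : Fin t => y (j.succAbove a)) := by
        rw [← Finset.sum_mul, ← hD n x, Finset.sum_add_distrib, ← Finset.smul_sum,
          ← Finset.mul_sum, ← hD t y]
        abel
end
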